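/- Let k ∈ ℕ, let L be a language with no polynomial-size single-valued nondeterministic circuits, and for each n let Min(L_n) be the size of the smallest SV-circuit computing L restricted to length n. Define A = { x1^y : x ∈ L, 0 < |x| ≤ y, y a power of 2, and (y+|x|)^{k+1} ≤ Min(L_{|x|}) < (2y+|x|)^{k+1} }. Then A is not computed by any family of single-valued nondeterministic circuits of size m^k: from any size-m^k SV circuit family for A one obtains, for infinitely many lengths n, SV circuits for L of size strictly smaller than Min(L_n), a contradiction. -/

import Mathlib

namespace Paper

/-! ## Bitstrings and languages -/

abbrev Bitstring := List Bool
abbrev Language := Set Bitstring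

/-- A self-delimiting duplication encoding of a bitstring, used for pairing. -/
def encodeBits : Bitstring → Bitstring
  | [] => []
  | b :: l => b :: b :: encodeBits l

/-- An injective pairing function on bitstrings. -/
def pair (x y : Bitstring) : Bitstring :=
  encodeBits x ++ [true, false] ++ encodeBits y

/-! ## Deterministic Turing machines (one two-way infinite tape) -/

/-- A deterministic Turing machine with state space `Fin (states+1)` and tape
alphabet `Fin (symbols+3)`, whose first three symbols are blank, bit `0`, bit `1`.
The transition returns (new state, written symbol, move-right?). -/
structure TM where
  states : ℕ
  symbols : ℕ
  start : Fin (states + 1)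
  accept : Fin (states + 1)
  reject : Fin (states + 1)
  trans : Fin (states + 1) → Fin (symbols + 3) → Fin (states + 1) × Fin (symbols + 3) × Bool

def TM.blank (M : TM) : Fin (M.symbols + 3) := ⟨0, by omega⟩
def TM.b0 (M : TM) : Fin (M.symbols + 3) := ⟨1, by omega⟩
def TM.b1 (M : TM) : Fin (M.symbols + 3) := ⟨2, by omega⟩
def TM.sym (M : TM) (b : Bool) : Fin (M.symbols + 3) := if b then M.b1 else M.b0

/-- A configuration of a Turing machine. -/
structure Cfg (M : TM) where
  state : Fin (M.states + 1)
  tape : ℤ → Fin (M.symbols + 3)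
  head : ℤ

/-- The initial configuration on input `x`. -/
def initCfg (M : TM) (x : Bitstring) : Cfg M where
  state := M.start
  tape := fun i => if 0 ≤ i ∧ i < (x.length : ℤ) then M.sym (x.getD i.toNat false) else M.blank
  head := 0

/-- One computation step; halting configurations are fixed points. -/
def stepCfg (M : TM) (c : Cfg M) : Cfg M :=
  if c.state = M.accept ∨ c.state = M.reject then c
  else
    let out := M.trans c.state (c.tape c.head)
    { state := out.1
      tape := fun i => if i = c.head then out.2.1 else c.tape i
      head := if out.2.2 then c.head + 1 else c.head - 1 }

/-- The configuration reached after `t` steps on input `x`. -/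
def runTM (M : TM) (x : Bitstring) (t : ℕ) : Cfg M := (stepCfg M)^[t] (initCfg M x)

def tmAccepts (M : TM) (x : Bitstring) (t : ℕ) : Prop := (runTM M x t).state = M.accept

def tmHalted (M : TM) (c : Cfg M) : Prop := c.state = M.accept ∨ c.state = M.reject

def symToBit (M : TM) (s : Fin (M.symbols + 3)) : Option Bool :=
  if s = M.b1 then some true else if s = M.b0 then some false else none

/-- The output of `M` on `x` after `t` steps: the maximal block of bit symbols
starting at cell `0`. -/
def tmOutput (M : TM) (x : Bitstring) (t : ℕ) : Bitstring :=
  (((List.range t).map fun i => symToBit M ((runTM M x t).tape (i : ℤ))).takeWhile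
      fun o => o.isSome).map fun o => o.getD false

/-- `M` decides the language `L` within time `t`. -/
def DecidesInTime (M : TM) (L : Language) (t : ℕ → ℕ) : Prop :=
  ∀ x : Bitstring,
    (x ∈ L → (runTM M x (t x.length)).state = M.accept) ∧
    (x ∉ L → (runTM M x (t x.length)).state = M.reject)

/-- `L` is decidable in deterministic polynomial time. -/
def PolyDecidable (L : Language) : Prop :=
  ∃ (c : ℕ) (M : TM), DecidesInTime M L fun n => (n + 2) ^ c

/-- `M` computes the function `f` within time `t` (halting in the accept state). -/
def ComputesInTime (M : TM) (f : Bitstring → Bitstring) (t : ℕ → ℕ) : Prop :=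
  ∀ x : Bitstring,
    (runTM M x (t x.length)).state = M.accept ∧ tmOutput M x (t x.length) = f x

def PolyComputable (f : Bitstring → Bitstring) : Prop :=
  ∃ (c : ℕ) (M : TM), ComputesInTime M f fun n => (n + 2) ^ c

/-- Polynomial-time many-one reducibility. -/
def PolyReducible (A B : Language) : Prop :=
  ∃ f : Bitstring → Bitstring, PolyComputable f ∧ ∀ x, x ∈ A ↔ f x ∈ B

/-- `M` decides `L` in space `s`: it halts with the correct answer and its head
never leaves the cells at distance at most `s n` from the origin. -/
def DecidesInSpace (M : TM) (L : Language) (s : ℕ → ℕ) : Prop :=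
  ∀ x : Bitstring,
    (∃ T : ℕ, tmHalted M (runTM M x T) ∧ ((runTM M x T).state = M.accept ↔ x ∈ L)) ∧
    ∀ t : ℕ, (runTM M x t).head.natAbs ≤ s x.length

def PSPACE : Set Language :=
  {L | ∃ (c : ℕ) (M : TM), DecidesInSpace M L fun n => (n + 2) ^ c}

/-! ## Quantifier-defined classes: NP, coNP, Σ₂-time, with advice -/

def InNP (L : Language) : Prop :=
  ∃ (c : ℕ) (M : TM), ∀ x : Bitstring,
    x ∈ L ↔ ∃ y : Bitstring, y.length ≤ (x.length + 2) ^ c ∧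
      tmAccepts M (pair x y) ((x.length + 2) ^ c)

def InCoNP (L : Language) : Prop := InNP Lᶜ

/-- Acceptance of a Σ₂ (∃∀) machine given by the deterministic predicate-machine `M`,
constant `c`, time bound `t` and advice/auxiliary string `w` on input `x`. -/
def Sig2Accepts (M : TM) (c : ℕ) (t : ℕ) (x w : Bitstring) : Prop :=
  ∃ y : Bitstring, y.length ≤ t ∧ ∀ z : Bitstring, z.length ≤ t →
    tmAccepts M (pair x (pair w (pair y z))) (c * t + c)

/-- `Σ₂TIME(t)/a` : Σ₂ machines running in time `O(t)` with `a` bits of advice. -/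
def Sigma2TimeAdv (t a : ℕ → ℕ) : Set Language :=
  {L | ∃ (c : ℕ) (M : TM) (adv : ℕ → Bitstring), (∀ n, (adv n).length ≤ a n) ∧
      ∀ x : Bitstring, x ∈ L ↔ Sig2Accepts M c (t x.length) x (adv x.length)}

def Sigma2Time (t : ℕ → ℕ) : Set Language := Sigma2TimeAdv t fun _ => 0

def Sigma2P : Set Language := {L | ∃ k : ℕ, L ∈ Sigma2Time fun n => (n + 2) ^ k}

def Sigma2E : Set Language := {L | ∃ k : ℕ, L ∈ Sigma2Time fun n => 2 ^ (k * (n + 1))}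

/-- `2^(n^ε)`. -/
noncomputable def texp (ε : ℝ) (n : ℕ) : ℕ := 2 ^ (Nat.ceil ((n : ℝ) ^ ε))

/-- `n^ε` (rounded up), used as an advice bound. -/
noncomputable def aexp (ε : ℝ) (n : ℕ) : ℕ := Nat.ceil ((n : ℝ) ^ ε)

noncomputable def Sigma2SubEXP : Set Language :=
  {L | ∀ ε : ℝ, 0 < ε → L ∈ Sigma2Time (texp ε)}

/-- `NP/poly`. -/
def NPpoly : Set Language :=
  {L | ∃ (c : ℕ) (M : TM) (adv : ℕ → Bitstring), (∀ n, (adv n).length ≤ (n + 2) ^ c) ∧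
      ∀ x : Bitstring, x ∈ L ↔ ∃ y : Bitstring, y.length ≤ (x.length + 2) ^ c ∧
        tmAccepts M (pair x (pair (adv x.length) y)) ((x.length + 2) ^ c)}

/-- Two languages agree on all strings of length `n`. -/
def AgreeAt (A B : Language) (n : ℕ) : Prop :=
  ∀ x : Bitstring, x.length = n → (x ∈ A ↔ x ∈ B)

/-- The infinitely-often version of a class of languages. -/
def ioClass (C : Set Language) : Set Language :=
  {L | ∃ A ∈ C, {n : ℕ | AgreeAt L A n}.Infinite}

/-! ## Counting over random strings -/

open Classical in
/-- The number of bitstrings `r` of length `m` satisfying `P`. -/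
noncomputable def countTrue (m : ℕ) (P : Bitstring → Prop) : ℕ :=
  (Finset.univ.filter fun r : Fin m → Bool => P (List.ofFn r)).card

open Classical in
/-- Classical characteristic function of a language. -/
noncomputable def chi (L : Language) (q : Bitstring) : Bool := decide (q ∈ L)

/-! ## Promise problems, prAM and prAugAM -/

/-- A promise problem: a pair of (intended to be disjoint) sets of yes- and no-instances. -/
structure PromiseProblem where
  Y : Language
  N : Language

def PromiseProblem.swap (P : PromiseProblem) : PromiseProblem := ⟨P.N, P.Y⟩

/-- `R` (a set of coded triples `⟨x, r, w⟩`, `r` the random string, `w` Merlin's witness)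
together with the randomness-exponent `k` is an Arthur–Merlin relation for `P` with
thresholds 2/3 and 1/3. -/
def IsPrAMRelation (P : PromiseProblem) (R : Language) (k : ℕ) : Prop :=
  PolyDecidable R ∧
    ∀ x : Bitstring,
      (x ∈ P.Y → 2 * 2 ^ ((x.length + 1) ^ k) ≤
        3 * countTrue ((x.length + 1) ^ k) fun r => ∃ w : Bitstring, pair x (pair r w) ∈ R) ∧
      (x ∈ P.N → 3 * countTrue ((x.length + 1) ^ k)
          (fun r => ∃ w : Bitstring, pair x (pair r w) ∈ R) ≤ 2 ^ ((x.length + 1) ^ k))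

def InPrAM (P : PromiseProblem) : Prop := ∃ (R : Language) (k : ℕ), IsPrAMRelation P R k

/-- The augmented Arthur–Merlin class of Aydinlioğlu and van Melkebeek, for promise
problems: a prAM verifier and a coNP verifier must both accept Merlin's first move. -/
def InPrAugAM (P : PromiseProblem) : Prop :=
  ∃ (c : ℕ) (G : PromiseProblem) (V : Language), InPrAM G ∧ InCoNP V ∧
    ∀ x : Bitstring,
      (x ∈ P.Y → ∃ y : Bitstring, y.length = x.length ^ c ∧
        pair x y ∈ G.Y ∧ pair x y ∈ V) ∧
      (x ∈ P.N → ∀ y : Bitstring, y.length = x.length ^ c →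
        pair x y ∈ G.N ∨ pair x y ∉ V)

/-- Languages in AugAM. -/
def InAugAM (L : Language) : Prop := InPrAugAM ⟨L, Lᶜ⟩

/-- An augmented Arthur–Merlin protocol deciding the language `L` when the verifiers
are given the advice bit `adv n` (prepended to the input) for inputs of length `n`. -/
def AugAMWithAdvice (adv : ℕ → Bool) (L : Language) : Prop :=
  ∃ (c : ℕ) (G : PromiseProblem) (V : Language), InPrAM G ∧ InCoNP V ∧
    ∀ x : Bitstring,
      (x ∈ L → ∃ y : Bitstring, y.length = x.length ^ c ∧
        pair (adv x.length :: x) y ∈ G.Y ∧ pair (adv x.length :: x) y ∈ V) ∧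
      (x ∉ L → ∀ y : Bitstring, y.length = x.length ^ c →
        pair (adv x.length :: x) y ∈ G.N ∨ pair (adv x.length :: x) y ∉ V)

/-- `AugAM/1`. -/
def InAugAMAdv1 (L : Language) : Prop := ∃ adv : ℕ → Bool, AugAMWithAdvice adv L

/-- `(coAugAM ∩ AugAM)/1` with a single shared advice bit. -/
def InAugAMCoAdv1 (L : Language) : Prop :=
  ∃ adv : ℕ → Bool, AugAMWithAdvice adv L ∧ AugAMWithAdvice adv Lᶜ

/-- A language agrees with a promise problem. -/
def AgreesWith (A : Language) (P : PromiseProblem) : Prop :=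
  (∀ x ∈ P.Y, x ∈ A) ∧ ∀ x ∈ P.N, x ∉ A

/-- A promise problem is solvable in a class of languages. -/
def PromiseInClass (C : Set Language) (P : PromiseProblem) : Prop :=
  ∃ A ∈ C, AgreesWith A P

/-- A language agrees with a promise problem on infinitely many input lengths. -/
def IoAgreesWith (A : Language) (P : PromiseProblem) : Prop :=
  {n : ℕ | ∀ x : Bitstring, x.length = n →
    (x ∈ P.Y → x ∈ A) ∧ (x ∈ P.N → x ∉ A)}.Infinite

/-! ## Boolean circuits (DAGs given by lists of gates) -/

inductive GateOp where
  | const (b : Bool)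
  | input (i : ℕ)
  | not (a : ℕ)
  | and (a b : ℕ)
  | or (a b : ℕ)

/-- Evaluate one gate given the input `x` and the values `vals` of earlier gates. -/
def GateOp.eval (x vals : List Bool) : GateOp → Bool
  | .const b => b
  | .input i => x.getD i false
  | .not a => !(vals.getD a false)
  | .and a b => (vals.getD a false) && (vals.getD b false)
  | .or a b => (vals.getD a false) || (vals.getD b false)

def evalGates (x : List Bool) : List GateOp → List Bool → List Bool
  | [], vals => vals
  | g :: gs, vals => evalGates x gs (vals ++ [g.eval x vals])

/-- A Boolean circuit: a list of gates, each referring to earlier gates by index. -/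
structure Circuit where
  gates : List GateOp

def Circuit.size (C : Circuit) : ℕ := C.gates.length
def Circuit.values (C : Circuit) (x : List Bool) : List Bool := evalGates x C.gates []
def Circuit.evalAt (C : Circuit) (x : List Bool) (i : ℕ) : Bool := (C.values x).getD i false
/-- The output of the circuit: the value of its last gate. -/
def Circuit.eval (C : Circuit) (x : List Bool) : Bool := (C.values x).getLastD false

/-! ## Nondeterministic and single-valued circuits -/

/-- A nondeterministic circuit: a circuit on `n + w` inputs, the last `w` of which
are witness bits. -/
structure NDCircuit where
  w : ℕ
  C : Circuit

def NDCircuit.size (D : NDCircuit) : ℕ := D.C.size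
def NDCircuit.Accepts (D : NDCircuit) (x : Bitstring) : Prop :=
  ∃ y : Bitstring, y.length = D.w ∧ D.C.eval (x ++ y) = true

/-- `NSIZE(s)`: decidable length-wise by nondeterministic circuits of size `s n`
(for all but finitely many `n`; every finite slice has some circuit anyway). -/
def NSIZE (s : ℕ → ℕ) (L : Language) : Prop :=
  ∃ D : ℕ → NDCircuit,
    (∃ n₀ : ℕ, ∀ n, n₀ ≤ n → (D n).size ≤ s n) ∧
    ∀ (n : ℕ) (x : Bitstring), x.length = n → (x ∈ L ↔ (D n).Accepts x)

/-- A single-valued nondeterministic circuit: a circuit on `n + w` inputs with two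
designated output gates, `valueGate` and `flagGate`. -/
structure SVCircuit where
  w : ℕ
  valueGate : ℕ
  flagGate : ℕ
  C : Circuit

def SVCircuit.size (D : SVCircuit) : ℕ := D.C.size
def SVCircuit.value (D : SVCircuit) (x y : Bitstring) : Bool := D.C.evalAt (x ++ y) D.valueGate
def SVCircuit.flag (D : SVCircuit) (x y : Bitstring) : Bool := D.C.evalAt (x ++ y) D.flagGate

/-- Partial single-valuedness on inputs of length `n`. -/
def SVCircuit.IsPSVOn (D : SVCircuit) (n : ℕ) : Prop :=
  ∀ x : Bitstring, x.length = n → ∀ y₁ y₂ : Bitstring, y₁.length = D.w → y₂.length = D.w →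
    D.flag x y₁ = true → D.flag x y₂ = true → D.value x y₁ = D.value x y₂

/-- Partial single-valuedness (on inputs of every length). -/
def SVCircuit.IsPSV (D : SVCircuit) : Prop := ∀ n : ℕ, D.IsPSVOn n

/-- `D` is a TSV circuit computing `L` on inputs of length `n`. -/
def SVComputesOn (D : SVCircuit) (L : Language) (n : ℕ) : Prop :=
  D.IsPSVOn n ∧
  (∀ x : Bitstring, x.length = n → ∃ y : Bitstring, y.length = D.w ∧ D.flag x y = true) ∧
  ∀ x : Bitstring, x.length = n →
    (x ∈ L ↔ ∃ y : Bitstring, y.length = D.w ∧ D.flag x y = true ∧ D.value x y = true)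

/-- `SVSIZE(s)`. -/
def SVSIZE (s : ℕ → ℕ) (L : Language) : Prop :=
  ∃ D : ℕ → SVCircuit,
    (∃ n₀ : ℕ, ∀ n, n₀ ≤ n → (D n).size ≤ s n) ∧
    ∀ n : ℕ, SVComputesOn (D n) L n

/-- The size of the smallest SV (TSV) circuit computing `L` on length-`n` inputs. -/
noncomputable def MinSV (L : Language) (n : ℕ) : ℕ :=
  sInf {s : ℕ | ∃ D : SVCircuit, SVComputesOn D L n ∧ D.size = s}

/-! ## Encoding SV circuits as bitstrings -/

def encNat (n : ℕ) : Bitstring := List.replicate n true ++ [false]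

def encGate : GateOp → Bitstring
  | .const b => false :: false :: [b]
  | .input i => false :: true :: encNat i
  | .not a => true :: false :: false :: encNat a
  | .and a b => true :: false :: true :: (encNat a ++ encNat b)
  | .or a b => true :: true :: (encNat a ++ encNat b)

def encodeSV (D : SVCircuit) : Bitstring :=
  encNat D.w ++ encNat D.valueGate ++ encNat D.flagGate ++ (D.C.gates.map encGate).flatten

/-! ## Oracle machines: deterministic and probabilistic -/

/-- Run an oracle machine: each round, the transition TM `N` is run for
`(|x|+|hist|+2)^c` steps on the pair of the input and the history of oracle answers.
Its output is either `1·b` ("halt with answer `b`"), or `0·q` ("query `q`").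
A query on which the (partial) oracle is undefined causes immediate rejection. -/
def omRun (N : TM) (c : ℕ) (O : Bitstring → Option Bool) (x : Bitstring) :
    ℕ → Bitstring → Bool
  | 0, _ => false
  | fuel + 1, hist =>
    match tmOutput N (pair x hist) ((x.length + hist.length + 2) ^ c) with
    | [] => false
    | b :: rest =>
      if b then rest.headD false
      else
        match O rest with
        | none => false
        | some a => omRun N c O x fuel (hist ++ [a])

/-- The list of oracle queries made during a run. -/
def omQueries (N : TM) (c : ℕ) (O : Bitstring → Option Bool) (x : Bitstring) :
    ℕ → Bitstring → List Bitstring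
  | 0, _ => []
  | fuel + 1, hist =>
    match tmOutput N (pair x hist) ((x.length + hist.length + 2) ^ c) with
    | [] => []
    | b :: rest =>
      if b then []
      else
        rest ::
          match O rest with
          | none => []
          | some a => omQueries N c O x fuel (hist ++ [a])

/-- The total oracle associated with a language. -/
noncomputable def oracleOfSet (L : Language) : Bitstring → Option Bool :=
  fun q => some (chi L q)

/-- `P^NP` with advice bound `a`: a polynomial-time deterministic oracle machine with
an NP oracle and `a n` bits of advice. -/
def InPNPAdvice (A : Language) (a : ℕ → ℕ) : Prop :=
  ∃ (N : TM) (c : ℕ) (V : Language) (adv : ℕ → Bitstring), InNP V ∧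
    (∀ n, (adv n).length ≤ a n) ∧
    ∀ x : Bitstring,
      x ∈ A ↔ omRun N c (oracleOfSet V) (pair x (adv x.length)) ((x.length + 2) ^ c) [] = true

/-- A probabilistic polynomial-time oracle machine: transition machine `N`, per-round
time/round-count exponent `c`, and random-string length exponent `k`. -/
structure POM where
  N : TM
  c : ℕ
  k : ℕ

def POM.randLen (P : POM) (n : ℕ) : ℕ := (n + 1) ^ P.k

def POM.accepts (P : POM) (O : Bitstring → Option Bool) (x r : Bitstring) : Bool :=
  omRun P.N P.c O (pair x r) ((x.length + 2) ^ P.c) []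

def POM.queries (P : POM) (O : Bitstring → Option Bool) (x r : Bitstring) : List Bitstring :=
  omQueries P.N P.c O (pair x r) ((x.length + 2) ^ P.c) []

open Classical in
/-- The partial oracle `L(C)` determined by a (PSV) circuit. -/
noncomputable def SVCircuit.partialOracle (D : SVCircuit) (q : Bitstring) : Option Bool :=
  if h : ∃ y : Bitstring, y.length = D.w ∧ D.flag q y = true then some (D.value q h.choose)
  else none

/-! ## SAT and oracle circuits -/

inductive Formula where
  | var (n : ℕ)
  | not (f : Formula)
  | and (f g : Formula)
  | or (f g : Formula)

def Formula.eval (a : ℕ → Bool) : Formula → Bool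
  | .var n => a n
  | .not f => !(f.eval a)
  | .and f g => (f.eval a) && (g.eval a)
  | .or f g => (f.eval a) || (g.eval a)

/-- Unary parsing of a natural number. -/
def parseNat : Bitstring → ℕ × Bitstring
  | true :: l => let p := parseNat l; (p.1 + 1, p.2)
  | false :: l => (0, l)
  | [] => (0, [])

/-- Fuelled parser for Boolean formulas from bitstrings. -/
def parseFormula : ℕ → Bitstring → Option (Formula × Bitstring)
  | 0, _ => none
  | fuel + 1, l =>
    match l with
    | false :: false :: r => let p := parseNat r; some (.var p.1, p.2)
    | false :: true :: r => do
        let p ← parseFormula fuel r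
        pure (.not p.1, p.2)
    | true :: false :: r => do
        let p ← parseFormula fuel r
        let q ← parseFormula fuel p.2
        pure (.and p.1 q.1, q.2)
    | true :: true :: r => do
        let p ← parseFormula fuel r
        let q ← parseFormula fuel p.2
        pure (.or p.1 q.1, q.2)
    | _ => none

/-- The satisfiability problem for (encoded) Boolean formulas. -/
def SAT : Language :=
  {x | ∃ (f : Formula) (r : Bitstring), parseFormula x.length x = some (f, r) ∧
        ∃ a : ℕ → Bool, f.eval a = true}

noncomputable def SATb : Bitstring → Bool := chi SAT

/-- Gates of an oracle circuit. -/
inductive OGateOp where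
  | const (b : Bool)
  | input (i : ℕ)
  | not (a : ℕ)
  | and (a b : ℕ)
  | or (a b : ℕ)
  | oracle (args : List ℕ)

def OGateOp.eval (O : Bitstring → Bool) (x vals : List Bool) : OGateOp → Bool
  | .const b => b
  | .input i => x.getD i false
  | .not a => !(vals.getD a false)
  | .and a b => (vals.getD a false) && (vals.getD b false)
  | .or a b => (vals.getD a false) || (vals.getD b false)
  | .oracle args => O (args.map fun a => vals.getD a false)

def OGateOp.weight : OGateOp → ℕ
  | .oracle args => args.length + 1
  | _ => 1

def evalOGates (O : Bitstring → Bool) (x : List Bool) :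
    List OGateOp → List Bool → List Bool
  | [], vals => vals
  | g :: gs, vals => evalOGates O x gs (vals ++ [g.eval O x vals])

/-- An oracle circuit (it is used here with no inputs, as a generator). -/
structure OCircuit where
  gates : List OGateOp

def OCircuit.size (C : OCircuit) : ℕ := (C.gates.map OGateOp.weight).sum
/-- The outputs of the oracle circuit: the values of all its gates on the empty input. -/
def OCircuit.outputs (C : OCircuit) (O : Bitstring → Bool) : List Bool :=
  evalOGates O [] C.gates []

/-- Split a list of bits into blocks of length `m`. -/
def chunks (m : ℕ) (l : List Bool) : List Bitstring :=
  (List.range (l.length / m)).map fun i => (l.drop (i * m)).take m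

/-- The set of `m`-bit strings generated by an oracle circuit with a SAT oracle. -/
noncomputable def OCircuit.genSet (C : OCircuit) (m : ℕ) : List Bitstring :=
  chunks m (C.outputs SATb)

/-! ## Σ₂-promise problems and hitting sets -/

/-- A promise problem whose promise is decided by a `Σ₂P` language. -/
def Sigma2Promise (P : PromiseProblem) : Prop :=
  ∃ D ∈ Sigma2P, ∀ x : Bitstring, x ∈ P.Y ∪ P.N ↔ x ∈ D

/-- `S` is a hitting set at length `n` for the promise problem `P` with AM relation
`(R, k)` (the strings in `S` play the role of Arthur's random strings). -/
def IsHittingSet (P : PromiseProblem) (R : Language) (k : ℕ) (n : ℕ)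
    (S : List Bitstring) : Prop :=
  (∀ s ∈ S, s.length = (n + 1) ^ k) ∧
  ∀ x : Bitstring, x.length = n →
    (x ∈ P.Y → ∀ y ∈ S, ∃ z : Bitstring, pair x (pair y z) ∈ R) ∧
    (x ∈ P.N → ∀ z : Bitstring, ∃ y ∈ S, pair x (pair y z) ∉ R)

/-! ## The promise problems Γ^M of Santhanam's technique -/

/-- `Γ^M` : yes-instances are pairs `⟨x, C⟩` with `C` a PSV circuit such that the
probabilistic oracle machine accepts `x` with probability at least `2/3` when given
the partial language of `C` as oracle; no-instances are those where it rejects with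
probability at least `2/3`. -/
noncomputable def GammaProblem (P : POM) : PromiseProblem where
  Y := {s | ∃ (x : Bitstring) (D : SVCircuit), s = pair x (encodeSV D) ∧ D.IsPSV ∧
        2 * 2 ^ P.randLen x.length ≤
          3 * countTrue (P.randLen x.length) fun r => P.accepts D.partialOracle x r = true}
  N := {s | ∃ (x : Bitstring) (D : SVCircuit), s = pair x (encodeSV D) ∧ D.IsPSV ∧
        2 * 2 ^ P.randLen x.length ≤
          3 * countTrue (P.randLen x.length) fun r => P.accepts D.partialOracle x r = false}


/-! ### Auxiliary material for Statement 11 -/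

lemma PD_evalGates_append (x : List Bool) (g1 g2 : List GateOp) :
    ∀ v : List Bool, evalGates x (g1 ++ g2) v = evalGates x g2 (evalGates x g1 v) := by
  induction g1 with
  | nil => intro v; rfl
  | cons g gs ih => intro v; simp only [List.cons_append, evalGates]; exact ih _

lemma PD_evalGates_prefix (x : List Bool) (gs : List GateOp) :
    ∀ v : List Bool, ∃ w, evalGates x gs v = v ++ w := by
  induction gs with
  | nil => intro v; exact ⟨[], by simp [evalGates]⟩
  | cons g gs ih =>
    intro v
    obtain ⟨w, hw⟩ := ih (v ++ [g.eval x v])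
    exact ⟨g.eval x v :: w, by simp [evalGates, hw]⟩

lemma PD_evalGates_length (x : List Bool) (gs : List GateOp) :
    ∀ v : List Bool, (evalGates x gs v).length = v.length + gs.length := by
  induction gs with
  | nil => intro v; simp [evalGates]
  | cons g gs ih =>
    intro v
    simp only [evalGates]
    rw [ih]
    simp only [List.length_append, List.length_cons, List.length_nil]
    omega

lemma PD_getD_snoc (v : List Bool) (b : Bool) : (v ++ [b]).getD v.length false = b := by
  rw [List.getD_append_right _ _ _ _ le_rfl]
  simp

lemma PD_getD_replicate (y j : ℕ) (h : j < y) :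
    (List.replicate y true).getD j false = true := by
  rw [List.getD_eq_getElem _ _ (by simpa using h)]
  simp

/-! #### A compiler from formulas to circuits -/

def PDclen : Formula → ℕ
  | .var _ => 1
  | .not f => PDclen f + 1
  | .and f g => PDclen f + PDclen g + 1
  | .or f g => PDclen f + PDclen g + 1

lemma PDclen_pos (f : Formula) : 0 < PDclen f := by
  cases f <;> simp [PDclen]

def PDcompile (p : ℕ) : Formula → List GateOp
  | .var i => [.input i]
  | .not f => PDcompile p f ++ [.not (p + PDclen f - 1)]
  | .and f g => PDcompile p f ++ (PDcompile (p + PDclen f) g ++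
      [.and (p + PDclen f - 1) (p + PDclen f + PDclen g - 1)])
  | .or f g => PDcompile p f ++ (PDcompile (p + PDclen f) g ++
      [.or (p + PDclen f - 1) (p + PDclen f + PDclen g - 1)])

lemma PDcompile_length (f : Formula) : ∀ p, (PDcompile p f).length = PDclen f := by
  induction f with
  | var i => intro p; rfl
  | not f ih => intro p; simp [PDcompile, PDclen, ih]
  | and f g ihf ihg => intro p; simp [PDcompile, PDclen, ihf, ihg]; omega
  | or f g ihf ihg => intro p; simp [PDcompile, PDclen, ihf, ihg]; omega

lemma PDcompile_spec (x : List Bool) (f : Formula) :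
    ∀ (p : ℕ) (v : List Bool), v.length = p →
      (evalGates x (PDcompile p f) v).getD (p + PDclen f - 1) false
        = f.eval (fun i => x.getD i false) := by
  induction f with
  | var i =>
    intro p v hv
    show (evalGates x [] (v ++ [GateOp.eval x v (.input i)])).getD (p + PDclen (.var i) - 1)
        false = _
    have e : p + PDclen (Formula.var i) - 1 = v.length := by simp only [PDclen]; omega
    rw [show evalGates x [] (v ++ [GateOp.eval x v (.input i)])
        = v ++ [GateOp.eval x v (.input i)] from rfl, e, PD_getD_snoc]
    rfl
  | not f ih =>
    intro p v hv
    simp only [PDcompile, PD_evalGates_append]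
    have hlen : (evalGates x (PDcompile p f) v).length = p + PDclen f := by
      rw [PD_evalGates_length, PDcompile_length, hv]
    have hval := ih p v hv
    set v' := evalGates x (PDcompile p f) v with hv'
    show (v' ++ [GateOp.eval x v' (.not (p + PDclen f - 1))]).getD
        (p + PDclen (.not f) - 1) false = _
    have e : p + PDclen (Formula.not f) - 1 = v'.length := by
      rw [hlen]; simp only [PDclen]; omega
    rw [e, PD_getD_snoc]
    show (!(v'.getD (p + PDclen f - 1) false)) = _
    rw [hval]
    rfl
  | and f g ihf ihg =>
    intro p v hv
    simp only [PDcompile, PD_evalGates_append]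
    have hlen1 : (evalGates x (PDcompile p f) v).length = p + PDclen f := by
      rw [PD_evalGates_length, PDcompile_length, hv]
    have hf := ihf p v hv
    set v1 := evalGates x (PDcompile p f) v with hv1
    have hg := ihg (p + PDclen f) v1 hlen1
    have hlen2 : (evalGates x (PDcompile (p + PDclen f) g) v1).length
        = p + PDclen f + PDclen g := by
      rw [PD_evalGates_length, PDcompile_length, hlen1]
    set v2 := evalGates x (PDcompile (p + PDclen f) g) v1 with hv2
    have hf2 : v2.getD (p + PDclen f - 1) false = f.eval (fun i => x.getD i false) := by
      obtain ⟨w, hw⟩ := PD_evalGates_prefix x (PDcompile (p + PDclen f) g) v1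
      rw [hv2, hw, List.getD_append _ _ _ _ (by have := PDclen_pos f; omega)]
      exact hf
    show (v2 ++ [GateOp.eval x v2 (.and (p + PDclen f - 1) (p + PDclen f + PDclen g - 1))]).getD
        (p + PDclen (.and f g) - 1) false = _
    have e : p + PDclen (Formula.and f g) - 1 = v2.length := by
      rw [hlen2]; simp only [PDclen]; omega
    rw [e, PD_getD_snoc]
    show ((v2.getD (p + PDclen f - 1) false) && (v2.getD (p + PDclen f + PDclen g - 1) false)) = _
    rw [hf2, hg]
    rfl
  | or f g ihf ihg =>
    intro p v hv
    simp only [PDcompile, PD_evalGates_append]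
    have hlen1 : (evalGates x (PDcompile p f) v).length = p + PDclen f := by
      rw [PD_evalGates_length, PDcompile_length, hv]
    have hf := ihf p v hv
    set v1 := evalGates x (PDcompile p f) v with hv1
    have hg := ihg (p + PDclen f) v1 hlen1
    have hlen2 : (evalGates x (PDcompile (p + PDclen f) g) v1).length
        = p + PDclen f + PDclen g := by
      rw [PD_evalGates_length, PDcompile_length, hlen1]
    set v2 := evalGates x (PDcompile (p + PDclen f) g) v1 with hv2
    have hf2 : v2.getD (p + PDclen f - 1) false = f.eval (fun i => x.getD i false) := by
      obtain ⟨w, hw⟩ := PD_evalGates_prefix x (PDcompile (p + PDclen f) g) v1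
      rw [hv2, hw, List.getD_append _ _ _ _ (by have := PDclen_pos f; omega)]
      exact hf
    show (v2 ++ [GateOp.eval x v2 (.or (p + PDclen f - 1) (p + PDclen f + PDclen g - 1))]).getD
        (p + PDclen (.or f g) - 1) false = _
    have e : p + PDclen (Formula.or f g) - 1 = v2.length := by
      rw [hlen2]; simp only [PDclen]; omega
    rw [e, PD_getD_snoc]
    show ((v2.getD (p + PDclen f - 1) false) || (v2.getD (p + PDclen f + PDclen g - 1) false)) = _
    rw [hf2, hg]
    rfl

/-! #### Formulas for finite sets of strings -/

def PDftrue : Formula := .or (.var 0) (.not (.var 0))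
def PDffalse : Formula := .and (.var 0) (.not (.var 0))

lemma PDftrue_eval (a : ℕ → Bool) : PDftrue.eval a = true := by
  simp [PDftrue, Formula.eval]

lemma PDffalse_eval (a : ℕ → Bool) : PDffalse.eval a = false := by
  simp [PDffalse, Formula.eval]

def PDlit (i : ℕ) (b : Bool) : Formula := if b then .var i else .not (.var i)

lemma PDlit_eval (a : ℕ → Bool) (i : ℕ) (b : Bool) : ((PDlit i b).eval a = true ↔ a i = b) := by
  cases b <;> simp [PDlit, Formula.eval]

def PDminterm : ℕ → Bitstring → Formula
  | _, [] => PDftrue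
  | i, b :: s => .and (PDlit i b) (PDminterm (i + 1) s)

lemma PDminterm_eval (a : ℕ → Bool) (s : Bitstring) :
    ∀ i, ((PDminterm i s).eval a = true ↔ ∀ j, j < s.length → a (i + j) = s.getD j false) := by
  induction s with
  | nil => intro i; simp [PDminterm, PDftrue_eval]
  | cons b s ih =>
    intro i
    simp only [PDminterm, Formula.eval, Bool.and_eq_true, PDlit_eval, ih (i + 1)]
    constructor
    · rintro ⟨h0, hr⟩ j hj
      match j with
      | 0 => simpa using h0
      | (jj + 1) =>
        have hjl : jj < s.length := by simp at hj; omega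
        have h2 := hr jj hjl
        have e : i + (jj + 1) = i + 1 + jj := by omega
        rw [e]
        simpa using h2
    · intro h
      constructor
      · have := h 0 (by simp)
        simpa using this
      · intro j hj
        have := h (j + 1) (by simp; omega)
        have e : i + 1 + j = i + (j + 1) := by omega
        rw [e]
        simpa using this

lemma PDminterm_eq (x s : Bitstring) (h : x.length = s.length) :
    ((PDminterm 0 s).eval (fun i => x.getD i false) = true ↔ x = s) := by
  rw [PDminterm_eval]
  constructor
  · intro hj
    refine List.ext_getElem h fun i h1 h2 => ?_
    have := hj i h2
    rw [Nat.zero_add] at this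
    rw [← List.getD_eq_getElem x false h1, ← List.getD_eq_getElem s false h2]
    exact this
  · rintro rfl j hj
    simp

def PDdisj : List Bitstring → Formula
  | [] => PDffalse
  | s :: S => .or (PDminterm 0 s) (PDdisj S)

lemma PDdisj_eval (a : ℕ → Bool) :
    ∀ S : List Bitstring,
      ((PDdisj S).eval a = true ↔ ∃ s ∈ S, (PDminterm 0 s).eval a = true)
  | [] => by simp [PDdisj, PDffalse_eval]
  | s :: S => by
    simp [PDdisj, Formula.eval, Bool.or_eq_true, PDdisj_eval a S]

def PDall : ℕ → List Bitstring
  | 0 => [[]]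
  | n + 1 => (PDall n).flatMap fun s => [false :: s, true :: s]

lemma PDall_mem : ∀ (n : ℕ) (x : Bitstring), (x ∈ PDall n ↔ x.length = n)
  | 0, x => by simp [PDall, List.length_eq_zero_iff]
  | n + 1, x => by
    cases x with
    | nil => simp [PDall, List.mem_flatMap]
    | cons b s =>
      simp only [PDall, List.mem_flatMap, List.mem_cons, List.not_mem_nil, or_false,
        List.mem_singleton, List.length_cons]
      constructor
      · rintro ⟨a, ha, h | h⟩ <;>
          (injection h with h1 h2; rw [h2, (PDall_mem n a).mp ha])
      · intro h
        have hs : s ∈ PDall n := (PDall_mem n s).mpr (by omega)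
        cases b
        · exact ⟨s, hs, Or.inl rfl⟩
        · exact ⟨s, hs, Or.inr rfl⟩

/-! #### Every length-`n` slice has some TSV circuit -/

lemma PD_exists_sv (L : Language) (n : ℕ) : ∃ D : SVCircuit, SVComputesOn D L n := by
  classical
  set S : List Bitstring := (PDall n).filter (fun s => chi L s) with hS
  set f : Formula := PDdisj S with hf
  have hflag0 : ∀ z : Bitstring, (evalGates z (PDcompile 1 f) [true]).getD 0 false = true := by
    intro z
    obtain ⟨w, hw⟩ := PD_evalGates_prefix z (PDcompile 1 f) [true]
    rw [hw]
    rfl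
  have hval0 : ∀ z : Bitstring, (evalGates z (PDcompile 1 f) [true]).getD (PDclen f) false
      = f.eval (fun i => z.getD i false) := by
    intro z
    have hsp := PDcompile_spec z f 1 [true] rfl
    have e : 1 + PDclen f - 1 = PDclen f := by omega
    rw [e] at hsp
    exact hsp
  have hchar : ∀ x : Bitstring, x.length = n →
      (f.eval (fun i => x.getD i false) = true ↔ x ∈ L) := by
    intro x hx
    rw [hf, PDdisj_eval]
    constructor
    · rintro ⟨s, hsS, hsv⟩
      have hsl : s.length = n := (PDall_mem n s).mp (List.mem_filter.mp hsS).1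
      have hxs : x = s := (PDminterm_eq x s (by omega)).mp hsv
      subst hxs
      have := (List.mem_filter.mp hsS).2
      simpa [chi] using this
    · intro hxL
      refine ⟨x, ?_, (PDminterm_eq x x rfl).mpr rfl⟩
      rw [hS, List.mem_filter]
      exact ⟨(PDall_mem n x).mpr hx, by simpa [chi] using hxL⟩
  refine ⟨⟨0, PDclen f, 0, ⟨GateOp.const true :: PDcompile 1 f⟩⟩, ?_, ?_, ?_⟩
  · intro x hx y1 y2 h1 h2 _ _
    have e1 : y1 = [] := List.length_eq_zero_iff.mp h1
    have e2 : y2 = [] := List.length_eq_zero_iff.mp h2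
    rw [e1, e2]
  · intro x hx
    refine ⟨[], rfl, ?_⟩
    show (evalGates (x ++ []) (GateOp.const true :: PDcompile 1 f) []).getD 0 false = true
    rw [List.append_nil]
    exact hflag0 x
  · intro x hx
    constructor
    · intro hxL
      refine ⟨[], rfl, ?_, ?_⟩
      · show (evalGates (x ++ []) (GateOp.const true :: PDcompile 1 f) []).getD 0 false = true
        rw [List.append_nil]
        exact hflag0 x
      · show (evalGates (x ++ []) (GateOp.const true :: PDcompile 1 f) []).getD (PDclen f)
            false = true
        rw [List.append_nil]
        show (evalGates x (PDcompile 1 f) [true]).getD (PDclen f) false = true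
        rw [hval0 x]
        exact (hchar x hx).mpr hxL
    · rintro ⟨yw, hylen, hfl, hv⟩
      have hEq : yw = [] := List.length_eq_zero_iff.mp hylen
      subst hEq
      have hv' : (evalGates (x ++ []) (GateOp.const true :: PDcompile 1 f) []).getD (PDclen f)
          false = true := hv
      rw [List.append_nil] at hv'
      have hv'' : (evalGates x (PDcompile 1 f) [true]).getD (PDclen f) false = true := hv'
      rw [hval0 x] at hv''
      exact (hchar x hx).mp hv''

/-! #### Basic facts about `MinSV` -/

lemma PD_minSV_le {L : Language} {n : ℕ} {D : SVCircuit} (h : SVComputesOn D L n) :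
    MinSV L n ≤ D.size := Nat.sInf_le ⟨D, h, rfl⟩

lemma PD_exists_min (L : Language) (n : ℕ) :
    ∃ D : SVCircuit, SVComputesOn D L n ∧ D.size = MinSV L n := by
  obtain ⟨D, hD⟩ := PD_exists_sv L n
  have : MinSV L n ∈ {s : ℕ | ∃ D : SVCircuit, SVComputesOn D L n ∧ D.size = s} :=
    Nat.sInf_mem ⟨D.size, D, hD, rfl⟩
  exact this

lemma PD_unbounded (L : Language) (hL : ∀ j : ℕ, ¬ SVSIZE (fun n => n ^ j) L)
    (j N : ℕ) : ∃ n, N ≤ n ∧ n ^ j < MinSV L n := by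
  by_contra hcon
  push_neg at hcon
  apply hL j
  choose D hD hsz using PD_exists_min L
  exact ⟨D, ⟨N, fun n hn => by rw [hsz n]; exact hcon n hn⟩, hD⟩

/-! #### Hard-wiring the padding into an SV circuit -/

def PDremap (n y : ℕ) : GateOp → GateOp
  | .input i => if i < n then .input i else if i < n + y then .const true else .input (i - y)
  | g => g

lemma PDremap_eval (n y : ℕ) (x w vals : List Bool) (hx : x.length = n) (g : GateOp) :
    (PDremap n y g).eval (x ++ w) vals
      = g.eval (x ++ (List.replicate y true ++ w)) vals := by
  cases g with
  | input i =>
    simp only [PDremap]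
    by_cases h1 : i < n
    · simp only [if_pos h1, GateOp.eval]
      rw [List.getD_append _ _ _ _ (by omega : i < x.length),
        List.getD_append _ _ _ _ (by omega : i < x.length)]
    · by_cases h2 : i < n + y
      · simp only [if_neg h1, if_pos h2, GateOp.eval]
        rw [List.getD_append_right _ _ _ _ (by omega : x.length ≤ i),
          List.getD_append _ _ _ _
            (by simp only [List.length_replicate]; omega :
              i - x.length < (List.replicate y true).length),
          PD_getD_replicate _ _ (by omega)]
      · simp only [if_neg h1, if_neg h2, GateOp.eval]
        rw [List.getD_append_right _ _ _ _ (by omega : x.length ≤ i - y),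
          List.getD_append_right _ _ _ _ (by omega : x.length ≤ i),
          List.getD_append_right _ _ _ _
            (by simp only [List.length_replicate]; omega :
              (List.replicate y true).length ≤ i - x.length)]
        simp only [List.length_replicate]
        congr 1
        omega
  | const b => rfl
  | not a => rfl
  | and a b => rfl
  | or a b => rfl

lemma PDremap_evalGates (n y : ℕ) (x w : List Bool) (hx : x.length = n) (gs : List GateOp) :
    ∀ vals : List Bool,
      evalGates (x ++ w) (gs.map (PDremap n y)) vals
        = evalGates (x ++ (List.replicate y true ++ w)) gs vals := by
  induction gs with
  | nil => intro v; rfl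
  | cons g gs ih =>
    intro v
    simp only [List.map_cons, evalGates, PDremap_eval n y x w v hx g]
    exact ih _

def PDpad (n y : ℕ) (E : SVCircuit) : SVCircuit :=
  ⟨E.w, E.valueGate, E.flagGate, ⟨E.C.gates.map (PDremap n y)⟩⟩

lemma PDpad_size (n y : ℕ) (E : SVCircuit) : (PDpad n y E).size = E.size := by
  simp [PDpad, SVCircuit.size, Circuit.size]

lemma PDpad_value (n y : ℕ) (E : SVCircuit) (x yw : Bitstring) (hx : x.length = n) :
    (PDpad n y E).value x yw = E.value (x ++ List.replicate y true) yw := by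
  simp only [SVCircuit.value, PDpad, Circuit.evalAt, Circuit.values]
  rw [PDremap_evalGates n y x yw hx, ← List.append_assoc]

lemma PDpad_flag (n y : ℕ) (E : SVCircuit) (x yw : Bitstring) (hx : x.length = n) :
    (PDpad n y E).flag x yw = E.flag (x ++ List.replicate y true) yw := by
  simp only [SVCircuit.flag, PDpad, Circuit.evalAt, Circuit.values]
  rw [PDremap_evalGates n y x yw hx, ← List.append_assoc]

lemma PD_pow_between (n : ℕ) (hn : 1 ≤ n) : ∃ i : ℕ, n ≤ 2 ^ i ∧ 2 ^ i < 2 * n := by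
  rcases eq_or_lt_of_le hn with h | h
  · exact ⟨0, by omega, by omega⟩
  · refine ⟨Nat.clog 2 n, Nat.le_pow_clog one_lt_two n, ?_⟩
    have h1 : 0 < Nat.clog 2 n := Nat.clog_pos one_lt_two h
    have h2 : 2 ^ Nat.pred (Nat.clog 2 n) < n := Nat.pow_pred_clog_lt_self one_lt_two h
    rw [← Nat.succ_pred_eq_of_pos h1, pow_succ]
    omega

/-- Let `k ∈ ℕ` and let `L` be a language with no polynomial-size
single-valued nondeterministic circuits. Then the padded language
`A = { x1^y : x ∈ L, 0 < |x| ≤ y, y a power of 2, and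
(y+|x|)^{k+1} ≤ Min(L_{|x|}) < (2y+|x|)^{k+1} }` is not computed by any family of
single-valued nondeterministic circuits of size `m^k`. -/
theorem padded_language_sv_lower_bound (k : ℕ) (L : Language)
    (hL : ∀ j : ℕ, ¬ SVSIZE (fun n => n ^ j) L) :
    ¬ SVSIZE (fun m => m ^ k)
      {s : Bitstring | ∃ (x : Bitstring) (y : ℕ), s = x ++ List.replicate y true ∧
        x ∈ L ∧ 0 < x.length ∧ x.length ≤ y ∧ (∃ i : ℕ, y = 2 ^ i) ∧
        (y + x.length) ^ (k + 1) ≤ MinSV L x.length ∧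
        MinSV L x.length < (2 * y + x.length) ^ (k + 1)} := by
  intro hA
  set A : Language :=
      {s : Bitstring | ∃ (x : Bitstring) (y : ℕ), s = x ++ List.replicate y true ∧
        x ∈ L ∧ 0 < x.length ∧ x.length ≤ y ∧ (∃ i : ℕ, y = 2 ^ i) ∧
        (y + x.length) ^ (k + 1) ≤ MinSV L x.length ∧
        MinSV L x.length < (2 * y + x.length) ^ (k + 1)} with hAdef
  obtain ⟨E, ⟨m₀, hm₀⟩, hE⟩ := hA
  obtain ⟨n, hnN, hnMin⟩ := PD_unbounded L hL (k + 2) (m₀ + 3 ^ (k + 1) + 1)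
  have h3pos : 0 < 3 ^ (k + 1) := pow_pos (by norm_num) _
  have hm₀n : m₀ ≤ n := by omega
  have h3n : 3 ^ (k + 1) ≤ n := by omega
  have hn1 : 1 ≤ n := by omega
  obtain ⟨i₀, hi₀1, hi₀2⟩ := PD_pow_between n hn1
  classical
  have hbase : n ≤ 2 ^ i₀ ∧ (n + 2 ^ i₀) ^ (k + 1) ≤ MinSV L n := by
    refine ⟨hi₀1, ?_⟩
    calc (n + 2 ^ i₀) ^ (k + 1) ≤ (3 * n) ^ (k + 1) := Nat.pow_le_pow_left (by omega) _
      _ = 3 ^ (k + 1) * n ^ (k + 1) := by rw [Nat.mul_pow]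
      _ ≤ n * n ^ (k + 1) := Nat.mul_le_mul_right _ h3n
      _ = n ^ (k + 2) := by ring
      _ ≤ MinSV L n := le_of_lt hnMin
  have hPle : ∀ i : ℕ, (n ≤ 2 ^ i ∧ (n + 2 ^ i) ^ (k + 1) ≤ MinSV L n) → i ≤ MinSV L n := by
    intro i hi
    obtain ⟨hia, hib⟩ := hi
    have h1 : i < 2 ^ i := Nat.lt_two_pow_self (n := i)
    have h2 : n + 2 ^ i ≤ (n + 2 ^ i) ^ (k + 1) := Nat.le_self_pow (by omega) _
    omega
  obtain ⟨istar, hPstar, hmax⟩ :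
      ∃ i : ℕ, (n ≤ 2 ^ i ∧ (n + 2 ^ i) ^ (k + 1) ≤ MinSV L n) ∧
        ∀ i' : ℕ, (n ≤ 2 ^ i' ∧ (n + 2 ^ i') ^ (k + 1) ≤ MinSV L n) → i' ≤ i := by
    refine ⟨Nat.findGreatest (fun i : ℕ => n ≤ 2 ^ i ∧ (n + 2 ^ i) ^ (k + 1) ≤ MinSV L n)
        (MinSV L n),
      Nat.findGreatest_spec
        (P := fun i : ℕ => n ≤ 2 ^ i ∧ (n + 2 ^ i) ^ (k + 1) ≤ MinSV L n)
        (hPle i₀ hbase) hbase, ?_⟩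
    intro i' hi'
    exact Nat.le_findGreatest (hPle i' hi') hi'
  obtain ⟨hyn, hylow⟩ := hPstar
  set y : ℕ := 2 ^ istar with hy
  have hy1 : 1 ≤ y := by omega
  have hyhigh : MinSV L n < (n + 2 * y) ^ (k + 1) := by
    by_contra hcon
    push_neg at hcon
    have h2y : 2 ^ (istar + 1) = 2 * y := by rw [pow_succ, hy]; omega
    have hP1 : n ≤ 2 ^ (istar + 1) ∧ (n + 2 ^ (istar + 1)) ^ (k + 1) ≤ MinSV L n := by
      rw [h2y]
      exact ⟨by omega, hcon⟩
    have := hmax (istar + 1) hP1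
    omega
  set m : ℕ := n + y with hm
  have hmemA : ∀ x : Bitstring, x.length = n →
      (x ∈ L ↔ (x ++ List.replicate y true) ∈ A) := by
    intro x hx
    constructor
    · intro hxL
      rw [hAdef]
      refine ⟨x, y, rfl, hxL, by omega, by omega, ⟨istar, hy⟩, ?_, ?_⟩
      · rw [hx, Nat.add_comm y n]
        exact hylow
      · rw [hx, Nat.add_comm (2 * y) n]
        exact hyhigh
    · intro hmem
      rw [hAdef] at hmem
      obtain ⟨x', y', hs, hx'L, hx'pos, hx'le, ⟨j, rfl⟩, -, -⟩ := hmem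
      have hlen := congrArg List.length hs
      simp only [List.length_append, List.length_replicate] at hlen
      have hyy : y = 2 ^ j := by
        rcases Nat.lt_trichotomy istar j with h | h | h
        · exfalso
          have h2 : 2 ^ (istar + 1) ≤ 2 ^ j := Nat.pow_le_pow_right (by omega) (by omega)
          rw [pow_succ] at h2
          omega
        · rw [hy, h]
        · exfalso
          have h2 : 2 ^ (j + 1) ≤ 2 ^ istar := Nat.pow_le_pow_right (by omega) (by omega)
          rw [pow_succ] at h2
          omega
      rw [← hyy] at hs hlen
      obtain ⟨hxx, -⟩ := List.append_inj hs (by omega)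
      rw [hxx]
      exact hx'L
  have hEm := hE m
  have hlenpad : ∀ x : Bitstring, x.length = n →
      (x ++ List.replicate y true).length = m := by
    intro x hx
    simp [hx, hm]
  obtain ⟨hpsv, htot, hmem⟩ := hEm
  have hcomp : SVComputesOn (PDpad n y (E m)) L n := by
    refine ⟨?_, ?_, ?_⟩
    · intro x hx y1 y2 h1 h2 hf1 hf2
      rw [PDpad_value n y (E m) x y1 hx, PDpad_value n y (E m) x y2 hx]
      rw [PDpad_flag n y (E m) x y1 hx] at hf1
      rw [PDpad_flag n y (E m) x y2 hx] at hf2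
      exact hpsv _ (hlenpad x hx) y1 y2 h1 h2 hf1 hf2
    · intro x hx
      obtain ⟨yw, hw1, hw2⟩ := htot _ (hlenpad x hx)
      exact ⟨yw, hw1, by rw [PDpad_flag n y (E m) x yw hx]; exact hw2⟩
    · intro x hx
      rw [hmemA x hx, hmem _ (hlenpad x hx)]
      constructor
      · rintro ⟨yw, hw1, hw2, hw3⟩
        refine ⟨yw, hw1, ?_, ?_⟩
        · rw [PDpad_flag n y (E m) x yw hx]
          exact hw2
        · rw [PDpad_value n y (E m) x yw hx]
          exact hw3
      · rintro ⟨yw, hw1, hw2, hw3⟩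
        rw [PDpad_flag n y (E m) x yw hx] at hw2
        rw [PDpad_value n y (E m) x yw hx] at hw3
        exact ⟨yw, hw1, hw2, hw3⟩
  have hminle : MinSV L n ≤ (PDpad n y (E m)).size := PD_minSV_le hcomp
  have hsize : (PDpad n y (E m)).size = (E m).size := PDpad_size n y (E m)
  have hEsz : (E m).size ≤ m ^ k := hm₀ m (by omega)
  have hmk : m ^ k < m ^ (k + 1) := Nat.pow_lt_pow_succ (by omega)
  omega

end Paper
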